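/- arXiv:1510.08385 — 3 statements merged into one kernel-verified Lean document; each statement's English description precedes it below -/
import Mathlib

section
/- Let X, Y be random variables taking values in compact intervals, with right-continuous joint CDF P_{XY} and marginals P_X, P_Y. If corr(X,Y) = ∫∫ (P_{XY}(x,y) − P_X(x)P_Y(y))² dx dy = 0, then X and Y are independent. -/
/-!
The integrand `(P_{XY} - P_X P_Y)²` is bounded and vanishes outside the box
`[a, b] × [c, d]`, so it is integrable and its vanishing integral forces
`P_{XY} = P_X P_Y` Lebesgue-almost everywhere. The increments of `P_{XY}` are dominated by
those of the marginals, so both sides are right-continuous in the product order; as every open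
quadrant `(x, ∞) × (y, ∞)` has positive measure, the identity then holds at every point. The sets
`{X ≤ x}` and `{Y ≤ y}` form π-systems generating the σ-algebras of `X` and `Y`, so factorisation
of the joint CDF is independence.
-/

open MeasureTheory ProbabilityTheory Filter Topology Set

lemma eq_of_ae_eq_const_of_continuousWithinAt {α β : Type*} [TopologicalSpace α]
    [MeasurableSpace α] {μ : Measure α} [μ.IsOpenPosMeasure] [TopologicalSpace β] [T1Space β]
    {f : α → β} {c : β} (hf : ∀ᵐ x ∂μ, f x = c) {s : Set α} (hs : IsOpen s) {z : α}
    (hz : z ∈ closure s) (hcont : ContinuousWithinAt f s z) : f z = c := by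
  have hz' : z ∈ closure (s ∩ {x | f x = c}) :=
    closure_minimal ((Measure.dense_of_ae hf).open_subset_closure_inter hs) isClosed_closure hz
  have hmaps : MapsTo f (s ∩ {x | f x = c}) {c} := fun x hx => hx.2
  simpa using (hcont.mono inter_subset_left).mem_closure hz' hmaps

lemma preimage_Iic_eq_empty_or_univ {α β : Type*} [LinearOrder β] {X : α → β} {a b t : β}
    (hX : ∀ ω, X ω ∈ Icc a b) (ht : t ∉ Icc a b) :
    X ⁻¹' Iic t = ∅ ∨ X ⁻¹' Iic t = univ := by
  rcases not_and_or.1 ht with ht | ht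
  · exact .inl (eq_empty_of_forall_notMem fun ω hω => ht ((hX ω).1.trans hω))
  · exact .inr (eq_univ_of_forall fun ω => (hX ω).2.trans (le_of_not_ge ht))

lemma sq_sub_mul_le_one {p q r : ℝ} (hp : p ∈ Icc 0 1) (hq : q ∈ Icc 0 1) (hr : r ∈ Icc 0 1) :
    (p - q * r) ^ 2 ≤ 1 := by
  have hqr : q * r ∈ Icc 0 1 := ⟨mul_nonneg hq.1 hr.1, mul_le_one₀ hq.2 hr.1 hr.2⟩
  nlinarith [hp.1, hp.2, hqr.1, hqr.2]

lemma continuousWithinAt_cdf_fst (ν : Measure ℝ) (z : ℝ × ℝ) :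
    ContinuousWithinAt (fun w : ℝ × ℝ => cdf ν w.1) (Ici z) z :=
  ((cdf ν).right_continuous z.1).comp continuousWithinAt_fst fun _ hw => hw.1

lemma continuousWithinAt_cdf_snd (ν : Measure ℝ) (z : ℝ × ℝ) :
    ContinuousWithinAt (fun w : ℝ × ℝ => cdf ν w.2) (Ici z) z :=
  ((cdf ν).right_continuous z.2).comp continuousWithinAt_snd fun _ hw => hw.2

section JointCDF

variable {Ω : Type*} [MeasurableSpace Ω] {μ : Measure Ω} {X Y : Ω → ℝ}

noncomputable def jointCDF (μ : Measure Ω) (X Y : Ω → ℝ) (z : ℝ × ℝ) : ℝ :=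
  μ.real (X ⁻¹' Iic z.1 ∩ Y ⁻¹' Iic z.2)

lemma measureReal_preimage_Iic_eq_cdf [IsProbabilityMeasure μ] (hX : Measurable X) (x : ℝ) :
    μ.real (X ⁻¹' Iic x) = cdf (μ.map X) x := by
  have := Measure.isProbabilityMeasure_map (μ := μ) hX.aemeasurable
  rw [cdf_eq_real, map_measureReal_apply hX measurableSet_Iic]

lemma measurable_jointCDF [SFinite μ] (hX : Measurable X) (hY : Measurable Y) :
    Measurable (jointCDF μ X Y) := by
  have hs : MeasurableSet {p : (ℝ × ℝ) × Ω | X p.2 ≤ p.1.1 ∧ Y p.2 ≤ p.1.2} :=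
    (measurableSet_le (hX.comp measurable_snd) (measurable_fst.comp measurable_fst)).inter
      (measurableSet_le (hY.comp measurable_snd) (measurable_snd.comp measurable_fst))
  exact (measurable_measure_prodMk_left hs).ennreal_toReal

lemma jointCDF_sub_le [IsProbabilityMeasure μ] (hX : Measurable X) (hY : Measurable Y)
    {x y u v : ℝ} (hxu : x ≤ u) (hyv : y ≤ v) :
    jointCDF μ X Y (u, v) - jointCDF μ X Y (x, y)
      ≤ (cdf (μ.map X) u - cdf (μ.map X) x) + (cdf (μ.map Y) v - cdf (μ.map Y) y) := by
  have hsub : X ⁻¹' Iic u ∩ Y ⁻¹' Iic v ⊆ (X ⁻¹' Iic x ∩ Y ⁻¹' Iic y)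
      ∪ (X ⁻¹' Iic u \ X ⁻¹' Iic x) ∪ (Y ⁻¹' Iic v \ Y ⁻¹' Iic y) := by
    intro ω ⟨hu, hv⟩
    by_cases hx : X ω ≤ x <;> by_cases hy : Y ω ≤ y <;> simp_all
  have hXdiff := measureReal_sdiff (μ := μ) (preimage_mono (Iic_subset_Iic.2 hxu))
    (hX measurableSet_Iic)
  have hYdiff := measureReal_sdiff (μ := μ) (preimage_mono (Iic_subset_Iic.2 hyv))
    (hY measurableSet_Iic)
  simp only [jointCDF, ← measureReal_preimage_Iic_eq_cdf hX, ← measureReal_preimage_Iic_eq_cdf hY]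
  linarith [measureReal_mono (μ := μ) hsub, measureReal_union_le (μ := μ)
    ((X ⁻¹' Iic x ∩ Y ⁻¹' Iic y) ∪ (X ⁻¹' Iic u \ X ⁻¹' Iic x)) (Y ⁻¹' Iic v \ Y ⁻¹' Iic y),
    measureReal_union_le (μ := μ) (X ⁻¹' Iic x ∩ Y ⁻¹' Iic y) (X ⁻¹' Iic u \ X ⁻¹' Iic x)]

lemma continuousWithinAt_jointCDF [IsProbabilityMeasure μ] (hX : Measurable X)
    (hY : Measurable Y) (z : ℝ × ℝ) : ContinuousWithinAt (jointCDF μ X Y) (Ici z) z := by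
  have hfst := continuousWithinAt_cdf_fst (μ.map X) z
  have hsnd := continuousWithinAt_cdf_snd (μ.map Y) z
  have hupper : Tendsto (fun w : ℝ × ℝ => jointCDF μ X Y z
      + ((cdf (μ.map X) w.1 - cdf (μ.map X) z.1) + (cdf (μ.map Y) w.2 - cdf (μ.map Y) z.2)))
      (𝓝[Ici z] z) (𝓝 (jointCDF μ X Y z)) := by
    simpa using ((hfst.tendsto.sub_const (cdf (μ.map X) z.1)).add
      (hsnd.tendsto.sub_const (cdf (μ.map Y) z.2))).const_add (jointCDF μ X Y z)
  refine tendsto_of_tendsto_of_tendsto_of_le_of_le' tendsto_const_nhds hupper ?_ ?_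
  · filter_upwards [self_mem_nhdsWithin] with w hw
    exact measureReal_mono (inter_subset_inter (preimage_mono (Iic_subset_Iic.2 hw.1))
      (preimage_mono (Iic_subset_Iic.2 hw.2)))
  · filter_upwards [self_mem_nhdsWithin] with w hw
    linarith [jointCDF_sub_le (μ := μ) hX hY (u := w.1) (v := w.2) hw.1 hw.2]

lemma measureReal_inter_eq_mul_of_eq_empty_or_univ [IsProbabilityMeasure μ] {s : Set Ω}
    (hs : s = ∅ ∨ s = univ) (t : Set Ω) : μ.real (s ∩ t) = μ.real s * μ.real t := by
  rcases hs with rfl | rfl <;> simp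

lemma jointCDF_eq_mul_of_notMem_Icc_prod [IsProbabilityMeasure μ] (hX : Measurable X)
    (hY : Measurable Y) {a b c d : ℝ} (hXb : ∀ ω, X ω ∈ Icc a b) (hYb : ∀ ω, Y ω ∈ Icc c d)
    {z : ℝ × ℝ} (hz : z ∉ Icc a b ×ˢ Icc c d) :
    jointCDF μ X Y z = cdf (μ.map X) z.1 * cdf (μ.map Y) z.2 := by
  rw [jointCDF, ← measureReal_preimage_Iic_eq_cdf hX, ← measureReal_preimage_Iic_eq_cdf hY]
  rcases not_and_or.1 hz with hz | hz
  · exact measureReal_inter_eq_mul_of_eq_empty_or_univ (preimage_Iic_eq_empty_or_univ hXb hz) _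
  · rw [inter_comm, mul_comm]
    exact measureReal_inter_eq_mul_of_eq_empty_or_univ (preimage_Iic_eq_empty_or_univ hYb hz) _

lemma integrable_sq_jointCDF_sub_mul [IsProbabilityMeasure μ] (hX : Measurable X)
    (hY : Measurable Y) {a b c d : ℝ} (hXb : ∀ ω, X ω ∈ Icc a b) (hYb : ∀ ω, Y ω ∈ Icc c d) :
    Integrable fun z : ℝ × ℝ => (jointCDF μ X Y z - cdf (μ.map X) z.1 * cdf (μ.map Y) z.2) ^ 2 := by
  have hmeas : Measurable fun z : ℝ × ℝ =>
      (jointCDF μ X Y z - cdf (μ.map X) z.1 * cdf (μ.map Y) z.2) ^ 2 :=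
    ((measurable_jointCDF hX hY).sub (((cdf _).mono.measurable.comp measurable_fst).mul
      ((cdf _).mono.measurable.comp measurable_snd))).pow_const 2
  have hbdd (z : ℝ × ℝ) :
      ‖(jointCDF μ X Y z - cdf (μ.map X) z.1 * cdf (μ.map Y) z.2) ^ 2‖ ≤ 1 := by
    rw [Real.norm_eq_abs, abs_sq]
    exact sq_sub_mul_le_one ⟨measureReal_nonneg, measureReal_le_one⟩
      ⟨cdf_nonneg _ _, cdf_le_one _ _⟩ ⟨cdf_nonneg _ _, cdf_le_one _ _⟩
  have hsupp : Function.support (fun z : ℝ × ℝ =>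
      (jointCDF μ X Y z - cdf (μ.map X) z.1 * cdf (μ.map Y) z.2) ^ 2) ⊆ Icc a b ×ˢ Icc c d := by
    intro z hz
    by_contra hout
    simp [jointCDF_eq_mul_of_notMem_Icc_prod hX hY hXb hYb hout] at hz
  exact (integrableOn_iff_integrable_of_support_subset hsupp).1
    (Measure.integrableOn_of_bounded (isCompact_Icc.prod isCompact_Icc).measure_lt_top.ne
      hmeas.aestronglyMeasurable (ae_of_all _ hbdd))

lemma jointCDF_eq_mul_of_ae_eq [IsProbabilityMeasure μ] (hX : Measurable X) (hY : Measurable Y)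
    (h : ∀ᵐ z, jointCDF μ X Y z = cdf (μ.map X) z.1 * cdf (μ.map Y) z.2) (z : ℝ × ℝ) :
    jointCDF μ X Y z = cdf (μ.map X) z.1 * cdf (μ.map Y) z.2 := by
  have hcont : ContinuousWithinAt
      (fun w => jointCDF μ X Y w - cdf (μ.map X) w.1 * cdf (μ.map Y) w.2) (Ici z) z :=
    (continuousWithinAt_jointCDF hX hY z).sub
      ((continuousWithinAt_cdf_fst _ z).mul (continuousWithinAt_cdf_snd _ z))
  have hz : z ∈ closure (Ioi z.1 ×ˢ Ioi z.2) := by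
    rw [closure_prod_eq, closure_Ioi, closure_Ioi]
    exact ⟨self_mem_Ici, self_mem_Ici⟩
  have hae : ∀ᵐ w ∂volume, jointCDF μ X Y w - cdf (μ.map X) w.1 * cdf (μ.map Y) w.2 = 0 := by
    filter_upwards [h] with w hw
    exact sub_eq_zero.2 hw
  exact sub_eq_zero.1 (eq_of_ae_eq_const_of_continuousWithinAt hae (isOpen_Ioi.prod isOpen_Ioi)
    hz (hcont.mono fun w hw => ⟨hw.1.le, hw.2.le⟩))

lemma indepFun_of_jointCDF_eq_mul [IsProbabilityMeasure μ] (hX : Measurable X)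
    (hY : Measurable Y) (h : ∀ z, jointCDF μ X Y z = cdf (μ.map X) z.1 * cdf (μ.map Y) z.2) :
    IndepFun X Y μ := by
  have hgen : ∀ T : Ω → ℝ, MeasurableSpace.comap T inferInstance
      = MeasurableSpace.generateFrom {s | ∃ t ∈ range Iic, T ⁻¹' t = s} := fun T => by
    rw [BorelSpace.measurable_eq (α := ℝ), borel_eq_generateFrom_Iic,
      MeasurableSpace.comap_generateFrom]
    rfl
  rw [IndepFun_iff_Indep]
  refine IndepSets.indep hX.comap_le hY.comap_le (isPiSystem_Iic.comap X)
    (isPiSystem_Iic.comap Y) (hgen X) (hgen Y) ?_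
  rw [IndepSets_iff]
  rintro _ _ ⟨_, ⟨x, rfl⟩, rfl⟩ ⟨_, ⟨y, rfl⟩, rfl⟩
  have hxy := h (x, y)
  rw [jointCDF, ← measureReal_preimage_Iic_eq_cdf hX, ← measureReal_preimage_Iic_eq_cdf hY,
    measureReal_def, measureReal_def, measureReal_def, ← ENNReal.toReal_mul] at hxy
  exact (ENNReal.toReal_eq_toReal_iff' (by finiteness) (by finiteness)).1 hxy

end JointCDF

/-- For random variables taking values in compact intervals, vanishing of the quadratic
dependency measure `corr(X,Y) = ∫∫ (P_{XY} − P_X P_Y)²` implies independence. -/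
theorem indep_of_quadratic_dependency_zero
    {Ω : Type*} [MeasurableSpace Ω] (μ : Measure Ω) [IsProbabilityMeasure μ]
    (X Y : Ω → ℝ) (hX : Measurable X) (hY : Measurable Y)
    (a b c d : ℝ)
    (hXb : ∀ ω, X ω ∈ Set.Icc a b) (hYb : ∀ ω, Y ω ∈ Set.Icc c d)
    (hcorr : ∫ z : ℝ × ℝ,
        ((μ (X ⁻¹' Set.Iic z.1 ∩ Y ⁻¹' Set.Iic z.2)).toReal
          - (μ (X ⁻¹' Set.Iic z.1)).toReal * (μ (Y ⁻¹' Set.Iic z.2)).toReal) ^ 2 = 0) :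
    IndepFun X Y μ := by
  have hint := integrable_sq_jointCDF_sub_mul (μ := μ) hX hY hXb hYb
  have hintegral : ∫ z, (jointCDF μ X Y z - cdf (μ.map X) z.1 * cdf (μ.map Y) z.2) ^ 2 = 0 := by
    simp only [jointCDF, ← measureReal_preimage_Iic_eq_cdf hX,
      ← measureReal_preimage_Iic_eq_cdf hY]
    exact hcorr
  have hae : ∀ᵐ z, jointCDF μ X Y z = cdf (μ.map X) z.1 * cdf (μ.map Y) z.2 := by
    filter_upwards [(integral_eq_zero_iff_of_nonneg (fun _ => sq_nonneg _) hint).1 hintegral]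
      with z hz
    exact sub_eq_zero.1 (pow_eq_zero_iff two_ne_zero |>.1 hz)
  exact indepFun_of_jointCDF_eq_mul hX hY (jointCDF_eq_mul_of_ae_eq hX hY hae)
end

section
/- Let P, Q be CDFs on ℝ of distributions supported in (−∞, V], with empirical versions based on samples: if P is the empirical CDF of points e_1,...,e_m and Q the empirical CDF of points g_1,...,g_m, all bounded above by V, then ∫_{−∞}^{V} (P(y) − Q(y))² dy = (1/m²) Σ_{j1,j2} (V − max(e_{j1}, e_{j2})) − (2/m²) Σ_{j1,j2} (V − max(e_{j1}, g_{j2})) + (1/m²) Σ_{j1,j2} (V − max(g_{j1}, g_{j2})). -/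
/-!
With `m P(y) = ∑ⱼ 1[eⱼ ≤ y]`, the square `(P - Q)²` expands into products of two such counts.
Since `1[a ≤ y] 1[b ≤ y] = 1[max a b ≤ y]`, each product of counts is a double sum of indicators
of half-lines `[max a b, ∞)`, whose integral over `(-∞, V]` is `V - max a b`.
-/

open MeasureTheory Finset

noncomputable def empiricalCount {ι : Type*} [Fintype ι] (a : ι → ℝ) (y : ℝ) : ℝ :=
  ∑ i, (Set.Ici (a i)).indicator 1 y

section EmpiricalCount

variable {ι κ : Type*} [Fintype ι] [Fintype κ]

theorem empiricalCount_eq_card (a : ι → ℝ) (y : ℝ) :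
    empiricalCount a y = (#{i | a i ≤ y} : ℝ) := by
  simp only [empiricalCount, Set.indicator_apply, Set.mem_Ici, Pi.one_apply, Finset.sum_boole]

theorem indicator_Ici_mul_indicator_Ici {α : Type*} [LinearOrder α] (a b y : α) :
    (Set.Ici a).indicator (1 : α → ℝ) y * (Set.Ici b).indicator 1 y
      = (Set.Ici (max a b)).indicator 1 y := by
  rw [← Set.Ici_inter_Ici, Set.inter_indicator_one, Pi.mul_apply]

theorem integrableOn_Iic_indicator_Ici (a V : ℝ) :
    IntegrableOn ((Set.Ici a).indicator (1 : ℝ → ℝ)) (Set.Iic V) := by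
  rw [IntegrableOn, integrable_indicator_iff measurableSet_Ici, IntegrableOn,
    Measure.restrict_restrict measurableSet_Ici, Set.Ici_inter_Iic]
  exact integrableOn_const measure_Icc_lt_top.ne

theorem setIntegral_Iic_indicator_Ici {a V : ℝ} (ha : a ≤ V) :
    ∫ y in Set.Iic V, (Set.Ici a).indicator 1 y = V - a := by
  rw [setIntegral_indicator measurableSet_Ici, Set.Iic_inter_Ici]
  simp only [Pi.one_apply, setIntegral_const, Real.volume_real_Icc_of_le ha, smul_eq_mul, mul_one]

theorem empiricalCount_mul_empiricalCount (a : ι → ℝ) (b : κ → ℝ) (y : ℝ) :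
    empiricalCount a y * empiricalCount b y
      = ∑ i, ∑ j, (Set.Ici (max (a i) (b j))).indicator 1 y := by
  simp only [empiricalCount, Finset.sum_mul_sum, indicator_Ici_mul_indicator_Ici]

theorem integrableOn_Iic_empiricalCount_mul (a : ι → ℝ) (b : κ → ℝ) (V : ℝ) :
    IntegrableOn (fun y => empiricalCount a y * empiricalCount b y) (Set.Iic V) := by
  simp only [empiricalCount_mul_empiricalCount]
  exact integrable_finsetSum _ fun i _ => integrable_finsetSum _ fun j _ =>
    integrableOn_Iic_indicator_Ici _ V

theorem setIntegral_Iic_empiricalCount_mul {a : ι → ℝ} {b : κ → ℝ} {V : ℝ}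
    (ha : ∀ i, a i ≤ V) (hb : ∀ j, b j ≤ V) :
    ∫ y in Set.Iic V, empiricalCount a y * empiricalCount b y
      = ∑ i, ∑ j, (V - max (a i) (b j)) := by
  simp only [empiricalCount_mul_empiricalCount]
  rw [integral_finsetSum _ fun i _ => integrable_finsetSum _ fun j _ =>
    integrableOn_Iic_indicator_Ici _ V]
  refine Finset.sum_congr rfl fun i _ => ?_
  rw [integral_finsetSum _ fun j _ => integrableOn_Iic_indicator_Ici _ V]
  exact Finset.sum_congr rfl fun j _ => setIntegral_Iic_indicator_Ici (max_le (ha i) (hb j))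

end EmpiricalCount

theorem empirical_quadratic_divergence_closed_form_general
    (m : ℕ) (V : ℝ) (e g : Fin m → ℝ)
    (he : ∀ j, e j ≤ V) (hg : ∀ j, g j ≤ V)
    (P Q : ℝ → ℝ)
    (hP : ∀ y, P y = ((Finset.univ.filter (fun j => e j ≤ y)).card : ℝ) / m)
    (hQ : ∀ y, Q y = ((Finset.univ.filter (fun j => g j ≤ y)).card : ℝ) / m) :
    ∫ y in Set.Iic V, (P y - Q y) ^ 2
      = (1 / (m : ℝ) ^ 2) * ∑ j₁, ∑ j₂, (V - max (e j₁) (e j₂))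
        - (2 / (m : ℝ) ^ 2) * ∑ j₁, ∑ j₂, (V - max (e j₁) (g j₂))
        + (1 / (m : ℝ) ^ 2) * ∑ j₁, ∑ j₂, (V - max (g j₁) (g j₂)) := by
  have hsq : ∀ y, (P y - Q y) ^ 2
      = 1 / (m : ℝ) ^ 2 * (empiricalCount e y * empiricalCount e y)
        - 2 / (m : ℝ) ^ 2 * (empiricalCount e y * empiricalCount g y)
        + 1 / (m : ℝ) ^ 2 * (empiricalCount g y * empiricalCount g y) := by
    intro y
    rw [hP, hQ, ← empiricalCount_eq_card, ← empiricalCount_eq_card]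
    ring
  have hEE := integrableOn_Iic_empiricalCount_mul e e V
  have hEG := integrableOn_Iic_empiricalCount_mul e g V
  have hGG := integrableOn_Iic_empiricalCount_mul g g V
  simp only [hsq]
  rw [integral_add, integral_sub, integral_const_mul, integral_const_mul, integral_const_mul,
    setIntegral_Iic_empiricalCount_mul he he, setIntegral_Iic_empiricalCount_mul he hg,
    setIntegral_Iic_empiricalCount_mul hg hg]
  exacts [hEE.const_mul _, hEG.const_mul _, (hEE.const_mul _).sub (hEG.const_mul _),
    hGG.const_mul _]

/-- Closed form of the 1-D empirical quadratic divergence: for empirical CDFs `P`, `Q` of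
samples `e`, `g` bounded above by `V`,
`∫_{−∞}^{V} (P − Q)² = (1/m²) ΣΣ (V − max(e_{j₁}, e_{j₂})) − (2/m²) ΣΣ (V − max(e_{j₁}, g_{j₂}))
+ (1/m²) ΣΣ (V − max(g_{j₁}, g_{j₂}))`. -/
theorem empirical_quadratic_divergence_closed_form
    (m : ℕ) (hm : 0 < m) (V : ℝ) (e g : Fin m → ℝ)
    (he : ∀ j, e j ≤ V) (hg : ∀ j, g j ≤ V)
    (P Q : ℝ → ℝ)
    (hP : ∀ y, P y = ((Finset.univ.filter (fun j => e j ≤ y)).card : ℝ) / m)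
    (hQ : ∀ y, Q y = ((Finset.univ.filter (fun j => g j ≤ y)).card : ℝ) / m) :
    ∫ y in Set.Iic V, (P y - Q y) ^ 2
      = (1 / (m : ℝ) ^ 2) * ∑ j₁, ∑ j₂, (V - max (e j₁) (e j₂))
        - (2 / (m : ℝ) ^ 2) * ∑ j₁, ∑ j₂, (V - max (e j₁) (g j₂))
        + (1 / (m : ℝ) ^ 2) * ∑ j₁, ∑ j₂, (V - max (g j₁) (g j₂)) :=
  empirical_quadratic_divergence_closed_form_general m V e g he hg P Q hP hQ
end

section
/- Bivariate closed form of the empirical quadratic divergence: let P be the empirical joint CDF of points (e_{p,1}, f_{p,1}),...,(e_{p,m}, f_{p,m}) and Q of points (e_{q,1}, f_{q,1}),...,(e_{q,m}, f_{q,m}), with all first coordinates ≤ V_e and second coordinates ≤ V_f. Then ∫∫ (P(x,y) − Q(x,y))² dx dy over (−∞,V_e]×(−∞,V_f] equals (1/m²) Σ_{j1,j2} (V_e − max(e_{p,j1}, e_{p,j2}))(V_f − max(f_{p,j1}, f_{p,j2})) − (2/m²) Σ_{j1,j2} (V_e − max(e_{p,j1}, e_{q,j2}))(V_f − max(f_{p,j1},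 f_{q,j2})) + (1/m²) Σ_{j1,j2} (V_e − max(e_{q,j1}, e_{q,j2}))(V_f − max(f_{q,j1}, f_{q,j2})). -/
/-!
With `pⱼ = (e_{p,j}, f_{p,j}) ∈ ℝ²`, `m • P = ∑ⱼ 𝟙[pⱼ, ∞)` for the product order, so `(P - Q)²`
expands into products `𝟙[a, ∞) * 𝟙[b, ∞) = 𝟙[a ⊔ b, ∞)`, and each of these integrates over
`(-∞, V]` to the area `(V.1 - max a.1 b.1) * (V.2 - max a.2 b.2)` of the rectangle `[a ⊔ b, V]`.
-/

open MeasureTheory Finset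

theorem sum_indicator_one_mul_sum_indicator_one {α ι κ : Type*} {A : ι → Set α}
    {B : κ → Set α} (s : Finset ι) (t : Finset κ) (x : α) :
    (∑ i ∈ s, (A i).indicator (1 : α → ℝ) x) * ∑ j ∈ t, (B j).indicator 1 x
      = ∑ i ∈ s, ∑ j ∈ t, (A i ∩ B j).indicator 1 x := by
  simp only [sum_mul_sum, Set.inter_indicator_one, Pi.mul_apply]

section IndicatorProducts

variable {α ι κ : Type*} [MeasurableSpace α] {μ : Measure α}

theorem integrable_inter_indicator_one {A B : Set α} (hA : MeasurableSet A)
    (hB : MeasurableSet B) (hAμ : μ A ≠ ⊤) : Integrable ((A ∩ B).indicator (1 : α → ℝ)) μ :=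
  (integrable_indicator_iff (hA.inter hB)).2 <| integrableOn_const <|
    ((measure_mono Set.inter_subset_left).trans_lt hAμ.lt_top).ne

variable {A : ι → Set α} {B : κ → Set α}

theorem integrable_sum_indicator_one_mul_sum_indicator_one (s : Finset ι) (t : Finset κ)
    (hA : ∀ i, MeasurableSet (A i)) (hB : ∀ j, MeasurableSet (B j)) (hAμ : ∀ i, μ (A i) ≠ ⊤) :
    Integrable (fun x => (∑ i ∈ s, (A i).indicator (1 : α → ℝ) x)
      * ∑ j ∈ t, (B j).indicator 1 x) μ := by
  simp only [sum_indicator_one_mul_sum_indicator_one]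
  exact integrable_finsetSum _ fun i _ => integrable_finsetSum _ fun j _ =>
    integrable_inter_indicator_one (hA i) (hB j) (hAμ i)

theorem integral_sum_indicator_one_mul_sum_indicator_one (s : Finset ι) (t : Finset κ)
    (hA : ∀ i, MeasurableSet (A i)) (hB : ∀ j, MeasurableSet (B j)) (hAμ : ∀ i, μ (A i) ≠ ⊤) :
    ∫ x, (∑ i ∈ s, (A i).indicator (1 : α → ℝ) x) * ∑ j ∈ t, (B j).indicator 1 x ∂μ
      = ∑ i ∈ s, ∑ j ∈ t, μ.real (A i ∩ B j) := by
  simp only [sum_indicator_one_mul_sum_indicator_one]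
  rw [integral_finsetSum _ fun i _ => integrable_finsetSum _ fun j _ =>
    integrable_inter_indicator_one (hA i) (hB j) (hAμ i)]
  refine sum_congr rfl fun i _ => ?_
  rw [integral_finsetSum _ fun j _ => integrable_inter_indicator_one (hA i) (hB j) (hAμ i)]
  exact sum_congr rfl fun j _ => integral_indicator_one ((hA i).inter (hB j))

end IndicatorProducts

theorem volume_real_Icc_prod {a b : ℝ × ℝ} (h : a ≤ b) :
    volume.real (Set.Icc a b) = (b.1 - a.1) * (b.2 - a.2) := by
  rw [Set.Icc_prod_eq, Measure.volume_eq_prod, measureReal_prod_prod,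
    Real.volume_real_Icc_of_le h.1, Real.volume_real_Icc_of_le h.2]

theorem volume_restrict_Iic_Ici_prod_ne_top (a V : ℝ × ℝ) :
    volume.restrict (Set.Iic V) (Set.Ici a) ≠ ⊤ := by
  rw [Measure.restrict_apply measurableSet_Ici, Set.Ici_inter_Iic]
  exact isCompact_Icc.measure_lt_top.ne

theorem setIntegral_Iic_sum_indicator_Ici_mul_sum_indicator_Ici {ι κ : Type*}
    (s : Finset ι) (t : Finset κ) (p : ι → ℝ × ℝ) (q : κ → ℝ × ℝ) (V : ℝ × ℝ)
    (hp : ∀ i, p i ≤ V) (hq : ∀ j, q j ≤ V) :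
    ∫ z in Set.Iic V, (∑ i ∈ s, (Set.Ici (p i)).indicator (1 : ℝ × ℝ → ℝ) z)
        * ∑ j ∈ t, (Set.Ici (q j)).indicator 1 z
      = ∑ i ∈ s, ∑ j ∈ t, (V.1 - max (p i).1 (q j).1) * (V.2 - max (p i).2 (q j).2) := by
  rw [integral_sum_indicator_one_mul_sum_indicator_one s t (fun _ => measurableSet_Ici)
    (fun _ => measurableSet_Ici) (fun i => volume_restrict_Iic_Ici_prod_ne_top (p i) V)]
  refine sum_congr rfl fun i _ => sum_congr rfl fun j _ => ?_
  rw [measureReal_restrict_apply (measurableSet_Ici.inter measurableSet_Ici), Set.Ici_inter_Ici,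
    Set.Ici_inter_Iic, volume_real_Icc_prod (sup_le (hp i) (hq j))]
  rfl

theorem natCast_card_filter_le_and_le_eq_sum_indicator_Ici {ι α β : Type*} [Fintype ι]
    [Preorder α] [Preorder β] (a : ι → α) (b : ι → β) (z : α × β)
    [DecidablePred fun j => a j ≤ z.1 ∧ b j ≤ z.2] :
    (#{j | a j ≤ z.1 ∧ b j ≤ z.2} : ℝ) = ∑ j, (Set.Ici (a j, b j)).indicator 1 z := by
  rw [natCast_card_filter]
  exact sum_congr rfl fun j _ => by simp [Set.indicator_apply, Prod.le_def]

theorem empirical_quadratic_divergence_closed_form_bivariate_general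
    (m : ℕ) (Ve Vf : ℝ)
    (ep fp eq' fq : Fin m → ℝ)
    (hep : ∀ j, ep j ≤ Ve) (heq : ∀ j, eq' j ≤ Ve)
    (hfp : ∀ j, fp j ≤ Vf) (hfq : ∀ j, fq j ≤ Vf)
    (P Q : ℝ → ℝ → ℝ)
    (hP : ∀ x y, P x y = ((Finset.univ.filter (fun j => ep j ≤ x ∧ fp j ≤ y)).card : ℝ) / m)
    (hQ : ∀ x y, Q x y = ((Finset.univ.filter (fun j => eq' j ≤ x ∧ fq j ≤ y)).card : ℝ) / m) :
    ∫ z in (Set.Iic Ve) ×ˢ (Set.Iic Vf), (P z.1 z.2 - Q z.1 z.2) ^ 2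
      = (1 / (m : ℝ) ^ 2) * ∑ j₁, ∑ j₂,
            (Ve - max (ep j₁) (ep j₂)) * (Vf - max (fp j₁) (fp j₂))
        - (2 / (m : ℝ) ^ 2) * ∑ j₁, ∑ j₂,
            (Ve - max (ep j₁) (eq' j₂)) * (Vf - max (fp j₁) (fq j₂))
        + (1 / (m : ℝ) ^ 2) * ∑ j₁, ∑ j₂,
            (Ve - max (eq' j₁) (eq' j₂)) * (Vf - max (fq j₁) (fq j₂)) := by
  set p : Fin m → ℝ × ℝ := fun j => (ep j, fp j)
  set q : Fin m → ℝ × ℝ := fun j => (eq' j, fq j)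
  set F : ℝ × ℝ → ℝ := fun z => ∑ j, (Set.Ici (p j)).indicator 1 z
  set G : ℝ × ℝ → ℝ := fun z => ∑ j, (Set.Ici (q j)).indicator 1 z
  have hPQ (z : ℝ × ℝ) : (P z.1 z.2 - Q z.1 z.2) ^ 2
      = ((m : ℝ) ^ 2)⁻¹ * (F z * F z - 2 * (F z * G z) + G z * G z) := by
    rw [hP, hQ, natCast_card_filter_le_and_le_eq_sum_indicator_Ici ep fp z,
      natCast_card_filter_le_and_le_eq_sum_indicator_Ici eq' fq z]
    ring
  have hprod (r s : Fin m → ℝ × ℝ) :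
      Integrable (fun z => (∑ j, (Set.Ici (r j)).indicator (1 : ℝ × ℝ → ℝ) z)
        * ∑ j, (Set.Ici (s j)).indicator 1 z) (volume.restrict (Set.Iic (Ve, Vf))) :=
    integrable_sum_indicator_one_mul_sum_indicator_one _ _ (fun _ => measurableSet_Ici)
      (fun _ => measurableSet_Ici) fun i => volume_restrict_Iic_Ici_prod_ne_top (r i) _
  have hFF_sub_FG : Integrable (fun z => F z * F z - 2 * (F z * G z))
      (volume.restrict (Set.Iic (Ve, Vf))) := (hprod p p).sub ((hprod p q).const_mul 2)
  have hp (j : Fin m) : p j ≤ (Ve, Vf) := ⟨hep j, hfp j⟩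
  have hq (j : Fin m) : q j ≤ (Ve, Vf) := ⟨heq j, hfq j⟩
  simp only [hPQ, Set.Iic_prod_Iic]
  rw [integral_const_mul, integral_add hFF_sub_FG (hprod q q),
    integral_sub (hprod p p) ((hprod p q).const_mul 2), integral_const_mul,
    setIntegral_Iic_sum_indicator_Ici_mul_sum_indicator_Ici _ _ _ _ _ hp hp,
    setIntegral_Iic_sum_indicator_Ici_mul_sum_indicator_Ici _ _ _ _ _ hp hq,
    setIntegral_Iic_sum_indicator_Ici_mul_sum_indicator_Ici _ _ _ _ _ hq hq]
  ring

/-- Closed form of the 2-D empirical quadratic divergence (Appendix B of the paper):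
for empirical joint CDFs `P`, `Q` of bivariate samples `(ep, fp)` and `(eq', fq)` bounded
above coordinatewise by `Ve` and `Vf`, the integral of `(P − Q)²` over
`(−∞, Ve] × (−∞, Vf]` equals the stated triple of double sums. -/
theorem empirical_quadratic_divergence_closed_form_bivariate
    (m : ℕ) (hm : 0 < m) (Ve Vf : ℝ)
    (ep fp eq' fq : Fin m → ℝ)
    (hep : ∀ j, ep j ≤ Ve) (heq : ∀ j, eq' j ≤ Ve)
    (hfp : ∀ j, fp j ≤ Vf) (hfq : ∀ j, fq j ≤ Vf)
    (P Q : ℝ → ℝ → ℝ)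
    (hP : ∀ x y, P x y = ((Finset.univ.filter (fun j => ep j ≤ x ∧ fp j ≤ y)).card : ℝ) / m)
    (hQ : ∀ x y, Q x y = ((Finset.univ.filter (fun j => eq' j ≤ x ∧ fq j ≤ y)).card : ℝ) / m) :
    ∫ z in (Set.Iic Ve) ×ˢ (Set.Iic Vf), (P z.1 z.2 - Q z.1 z.2) ^ 2
      = (1 / (m : ℝ) ^ 2) * ∑ j₁, ∑ j₂,
            (Ve - max (ep j₁) (ep j₂)) * (Vf - max (fp j₁) (fp j₂))
        - (2 / (m : ℝ) ^ 2) * ∑ j₁, ∑ j₂,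
            (Ve - max (ep j₁) (eq' j₂)) * (Vf - max (fp j₁) (fq j₂))
        + (1 / (m : ℝ) ^ 2) * ∑ j₁, ∑ j₂,
            (Ve - max (eq' j₁) (eq' j₂)) * (Vf - max (fq j₁) (fq j₂)) :=
  empirical_quadratic_divergence_closed_form_bivariate_general m Ve Vf ep fp eq' fq hep heq hfp hfq
    P Q hP hQ
end
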